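/- Let $V_1, \ldots, V_N \subseteq \mathbb{F}_2^m$ (with $m = 7k$, $N = 2^k$) be linear subspaces of dimension $2k$ each such that $V_i \cap V_j = \{0\}$ for all $i \neq j$, and such that every nonzero $v \in \mathbb{F}_2^m$ lies in $V_i^\perp$ for at most $7$ indices $i$. Then for every nonzero $\gamma_x \in \mathbb{F}_2^m$: $\sum_{i \neq j} |V_i^\perp \cap (V_j^\perp + \gamma_x)| + 2\sum_i |V_i^\perp \cap (V_i^\perp + \gamma_x)| \leq 2^{2k} \cdot 2^{3k} + 7 \cdot 2^{5k+1} \leq 2^{5k+4}$. -/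

import Mathlib

/-- The standard bilinear form on `𝔽₂ᵐ`. -/
def ip {m : ℕ} (x y : Fin m → ZMod 2) : ZMod 2 := ∑ i, x i * y i

/-- Orthogonal complement of a subspace w.r.t. the standard bilinear form. -/
def perp {m : ℕ} (W : Submodule (ZMod 2) (Fin m → ZMod 2)) : Set (Fin m → ZMod 2) :=
  {v | ∀ w ∈ W, ip v w = 0}

noncomputable def Bf (m : ℕ) : LinearMap.BilinForm (ZMod 2) (Fin m → ZMod 2) :=
  LinearMap.mk₂ (ZMod 2) ip
    (by intro a b c; simp [ip, add_mul, Finset.sum_add_distrib])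
    (by intro c a b; simp [ip, Finset.mul_sum, mul_assoc])
    (by intro a b c; simp [ip, mul_add, Finset.sum_add_distrib])
    (by intro c a b; simp [ip, Finset.mul_sum]; ring_nf; simp [mul_assoc, mul_comm, mul_left_comm])

lemma ip_comm {m : ℕ} (x y : Fin m → ZMod 2) : ip x y = ip y x := by
  simp [ip, mul_comm]

lemma Bf_nondeg (m : ℕ) : (Bf m).Nondegenerate := by
  constructor <;> intro x hx <;> ext i <;> have : ip _ _ = 0 := hx (Pi.single i 1) <;>
  simpa [ip, Pi.single_apply, mul_ite, ite_mul, Finset.sum_ite_eq', Finset.sum_ite_eq] using this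

lemma Bf_refl (m : ℕ) : (Bf m).IsRefl := by
  intro x y h
  show ip y x = 0; rw [ip_comm]; exact h

lemma Bf_apply {m : ℕ} (x y : Fin m → ZMod 2) : Bf m x y = ip x y := rfl

lemma perp_eq {m : ℕ} (W : Submodule (ZMod 2) (Fin m → ZMod 2)) :
    perp W = ↑((Bf m).orthogonal W) := by
  ext v
  simp only [perp, Set.mem_setOf_eq, SetLike.mem_coe, LinearMap.BilinForm.mem_orthogonal_iff,
    LinearMap.BilinForm.IsOrtho, Bf_apply]
  exact ⟨fun h w hw => by rw [ip_comm]; exact h w hw,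
         fun h w hw => by rw [ip_comm]; exact h w hw⟩

lemma finrank_perp {m : ℕ} (W : Submodule (ZMod 2) (Fin m → ZMod 2)) :
    Module.finrank (ZMod 2) ((Bf m).orthogonal W) = m - Module.finrank (ZMod 2) W := by
  rw [LinearMap.BilinForm.finrank_orthogonal (Bf_nondeg m) W, Module.finrank_fin_fun]

lemma card_perp {m : ℕ} (W : Submodule (ZMod 2) (Fin m → ZMod 2)) :
    Nat.card ((Bf m).orthogonal W) = 2 ^ (m - Module.finrank (ZMod 2) W) := by
  classical
  haveI : Fintype ↥((Bf m).orthogonal W) := Fintype.ofFinite _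
  rw [Nat.card_eq_fintype_card, Module.card_eq_pow_finrank (K := ZMod 2), ZMod.card, finrank_perp]

lemma add_self_zero {m : ℕ} (v : Fin m → ZMod 2) : v + v = 0 := by
  ext i
  show v i + v i = 0
  rw [← two_mul, show (2 : ZMod 2) = 0 from rfl, zero_mul]

/-- coset intersection bound -/
lemma coset_card_le {m : ℕ} (A B : Submodule (ZMod 2) (Fin m → ZMod 2))
    (γ : Fin m → ZMod 2) :
    Nat.card ↥((A : Set _) ∩ ((· + γ) '' (B : Set _))) ≤ Nat.card ↥(A ⊓ B : Submodule (ZMod 2) _) := by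
  classical
  set S : Set (Fin m → ZMod 2) := (A : Set _) ∩ ((· + γ) '' (B : Set _)) with hS
  rcases S.eq_empty_or_nonempty with h | ⟨x0, hx0⟩
  · simp [h]
  · obtain ⟨hx0A, b0, hb0, hb0e⟩ := hx0
    have hsub : (· + x0) '' S ⊆ ((A ⊓ B : Submodule (ZMod 2) _) : Set _) := by
      rintro y ⟨z, ⟨hzA, b, hb, hbe⟩, rfl⟩
      simp only at hbe hb0e ⊢
      refine ⟨A.add_mem hzA hx0A, ?_⟩
      have heq : z + x0 = b + b0 := by
        rw [← hbe, ← hb0e]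
        have := add_self_zero γ
        abel_nf
        rw [show (2:ℤ) • γ = γ + γ by abel, this]
        abel
      rw [heq]; exact B.add_mem hb hb0
    have h1 : Nat.card ↥S = ((· + x0) '' S).ncard := by
      rw [Set.ncard_image_of_injective _ (add_left_injective x0), Nat.card_coe_set_eq]
    rw [h1, ← Nat.card_coe_set_eq]
    exact Nat.card_mono (Set.toFinite _) hsub

theorem stmt10 (k : ℕ)
    (V : Fin (2 ^ k) → Submodule (ZMod 2) (Fin (7 * k) → ZMod 2))
    (hdim : ∀ i, Module.finrank (ZMod 2) (V i) = 2 * k)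
    (hint : ∀ i j, i ≠ j → V i ⊓ V j = ⊥)
    (hperp : ∀ v : Fin (7 * k) → ZMod 2, v ≠ 0 → Nat.card {i // v ∈ perp (V i)} ≤ 7)
    (γx : Fin (7 * k) → ZMod 2) (hγ : γx ≠ 0) :
    ((∑ i : Fin (2 ^ k), ∑ j : Fin (2 ^ k),
        if i ≠ j then Nat.card ↥(perp (V i) ∩ ((· + γx) '' perp (V j))) else 0) +
      2 * ∑ i : Fin (2 ^ k), Nat.card ↥(perp (V i) ∩ ((· + γx) '' perp (V i))) ≤
        2 ^ (2 * k) * 2 ^ (3 * k) + 7 * 2 ^ (5 * k + 1)) ∧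
      2 ^ (2 * k) * 2 ^ (3 * k) + 7 * 2 ^ (5 * k + 1) ≤ 2 ^ (5 * k + 4) := by
  classical
  constructor
  · -- main bound
    have hpair : ∀ i j : Fin (2 ^ k), i ≠ j →
        Nat.card ↥(perp (V i) ∩ ((· + γx) '' perp (V j))) ≤ 2 ^ (3 * k) := by
      intro i j hij
      rw [perp_eq, perp_eq]
      refine le_trans (coset_card_le _ _ _) ?_
      have hinf : (Bf (7*k)).orthogonal (V i) ⊓ (Bf (7*k)).orthogonal (V j)
          = (Bf (7*k)).orthogonal (V i ⊔ V j) := by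
        apply le_antisymm
        · rintro v ⟨hvi, hvj⟩ w hw
          obtain ⟨a, ha, b, hb, rfl⟩ := Submodule.mem_sup.mp hw
          have : (Bf (7*k)) (a + b) v = (Bf (7*k)) a v + (Bf (7*k)) b v := by
            simp [map_add]
          rw [this, show (Bf (7*k)) a v = 0 from hvi a ha, show (Bf (7*k)) b v = 0 from hvj b hb, add_zero]
        · exact le_inf (LinearMap.BilinForm.orthogonal_le le_sup_left)
            (LinearMap.BilinForm.orthogonal_le le_sup_right)
      rw [hinf, card_perp]
      have hsup : Module.finrank (ZMod 2) ↥(V i ⊔ V j) = 4 * k := by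
        have := Submodule.finrank_sup_add_finrank_inf_eq (V i) (V j)
        rw [hint i j hij, hdim i, hdim j] at this
        simp at this
        omega
      rw [hsup]
      apply Nat.pow_le_pow_right (by norm_num)
      omega
    have hsame : ∀ i : Fin (2 ^ k),
        Nat.card ↥(perp (V i) ∩ ((· + γx) '' perp (V i))) ≤
          if γx ∈ perp (V i) then 2 ^ (5 * k) else 0 := by
      intro i
      by_cases hg : γx ∈ perp (V i)
      · rw [if_pos hg]
        have hsub : perp (V i) ∩ ((· + γx) '' perp (V i)) ⊆ ((Bf (7*k)).orthogonal (V i) : Set _) := by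
          rw [← perp_eq]; exact Set.inter_subset_left
        calc Nat.card ↥(perp (V i) ∩ ((· + γx) '' perp (V i)))
            ≤ Nat.card ((Bf (7*k)).orthogonal (V i)) := Nat.card_mono (Set.toFinite _) hsub
          _ = 2 ^ (7 * k - Module.finrank (ZMod 2) (V i)) := card_perp _
          _ = 2 ^ (5 * k) := by rw [hdim i]; congr 1; omega
      · rw [if_neg hg]
        have : perp (V i) ∩ ((· + γx) '' perp (V i)) = ∅ := by
          ext y
          simp only [Set.mem_inter_iff, Set.mem_image, Set.mem_empty_iff_false, iff_false]
          rintro ⟨hyA, b, hb, rfl⟩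
          apply hg
          have hγeq : γx = (b + γx) + b := by
            have := add_self_zero b; abel_nf
            rw [show (2:ℤ) • b = b + b by abel, this]; abel
          rw [hγeq, perp_eq, SetLike.mem_coe]
          rw [perp_eq, SetLike.mem_coe] at hyA hb
          exact Submodule.add_mem _ hyA hb
        rw [this]
        simp
    -- sum bounds
    have h1 : (∑ i : Fin (2 ^ k), ∑ j : Fin (2 ^ k),
        if i ≠ j then Nat.card ↥(perp (V i) ∩ ((· + γx) '' perp (V j))) else 0)
        ≤ 2 ^ (2 * k) * 2 ^ (3 * k) := by
      calc (∑ i : Fin (2 ^ k), ∑ j : Fin (2 ^ k),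
          if i ≠ j then Nat.card ↥(perp (V i) ∩ ((· + γx) '' perp (V j))) else 0)
          ≤ ∑ _i : Fin (2 ^ k), ∑ _j : Fin (2 ^ k), 2 ^ (3 * k) := by
            apply Finset.sum_le_sum; intro i _
            apply Finset.sum_le_sum; intro j _
            by_cases hij : i = j
            · simp [hij]
            · rw [if_pos hij]; exact hpair i j hij
        _ = 2 ^ k * (2 ^ k * 2 ^ (3 * k)) := by
            simp [Finset.sum_const, mul_assoc]
        _ = 2 ^ (2 * k) * 2 ^ (3 * k) := by
            rw [← mul_assoc, ← pow_add]; congr 2; omega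
    have h2 : (2 * ∑ i : Fin (2 ^ k), Nat.card ↥(perp (V i) ∩ ((· + γx) '' perp (V i))))
        ≤ 7 * 2 ^ (5 * k + 1) := by
      have hcount : (Finset.univ.filter (fun i : Fin (2^k) => γx ∈ perp (V i))).card ≤ 7 := by
        have := hperp γx hγ
        rwa [Nat.card_eq_fintype_card, Fintype.card_subtype] at this
      calc 2 * ∑ i : Fin (2 ^ k), Nat.card ↥(perp (V i) ∩ ((· + γx) '' perp (V i)))
          ≤ 2 * ∑ i : Fin (2 ^ k), (if γx ∈ perp (V i) then 2 ^ (5 * k) else 0) := by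
            apply Nat.mul_le_mul_left
            exact Finset.sum_le_sum (fun i _ => hsame i)
        _ = 2 * ((Finset.univ.filter (fun i : Fin (2^k) => γx ∈ perp (V i))).card * 2 ^ (5 * k)) := by
            rw [← Finset.sum_filter, Finset.sum_const, smul_eq_mul]
        _ ≤ 2 * (7 * 2 ^ (5 * k)) := by
            apply Nat.mul_le_mul_left
            exact Nat.mul_le_mul_right _ hcount
        _ = 7 * 2 ^ (5 * k + 1) := by ring
    omega
  · -- arithmetic
    have : 2 ^ (2 * k) * 2 ^ (3 * k) = 2 ^ (5 * k) := by rw [← pow_add]; congr 1; omega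
    rw [this]
    have h5 : 2 ^ (5 * k + 1) = 2 * 2 ^ (5*k) := by rw [pow_succ]; ring
    have h4 : 2 ^ (5 * k + 4) = 16 * 2 ^ (5*k) := by rw [pow_add]; ring
    omega
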